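/- Let p be an odd prime, let F be a finite extension of ℚ_p, and let E/F be a quadratic extension which is tamely ramified, i.e., p does not divide the ramification index e(E/F). Let χ : F^× → ℂ^× be a group homomorphism that is trivial on U_F^n for some n ≥ 0, and suppose its conductor a(χ) = m satisfies m ≥ 2. Then the conductor of the homomorphism χ ∘ N_{E/F} : E^× → ℂ^× equals e(E/F)·(m − 1) + 1. -/

import Mathlib

noncomputable section

/-- `u ∈ U_F^n`: for `n = 0` this is membership in `𝒪_F^×`; for `n ≥ 1` it is membership in
`1 + 𝔪_F^n` (here `O` is the ring of integers and `m` its maximal ideal). -/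
def inUnitFiltration {F : Type*} [Field F] (O : Subring F) (m : Ideal O) (n : ℕ) (u : Fˣ) : Prop :=
  (u : F) ∈ O ∧ ((u⁻¹ : Fˣ) : F) ∈ O ∧ ∃ x : O, x ∈ m ^ n ∧ (x : F) = (u : F) - 1

/-- The character `χ` is trivial on the unit group `U_F^n`. -/
def trivialOnUnits {F : Type*} [Field F] (O : Subring F) (m : Ideal O) (χ : Fˣ →* ℂˣ)
    (n : ℕ) : Prop :=
  ∀ u : Fˣ, inUnitFiltration O m n u → χ u = 1

/-- The conductor `a(χ)`: the least `n ≥ 0` such that `χ` is trivial on `U_F^n`. -/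
noncomputable def charConductor {F : Type*} [Field F] (O : Subring F) (m : Ideal O)
    (χ : Fˣ →* ℂˣ) : ℕ :=
  sInf {n | trivialOnUnits O m χ n}


/-! For `u = 1 + x` with `x ∈ 𝔪_E^{e(m-1)+1}` one has `N u = 1 + Tr x + N x`. Since
`𝔪_E^{e(m-1)+1} = 𝔪_F^{m-1} 𝔪_E` and `Tr 𝔪_E ⊆ 𝔪_F`, the trace `Tr x` lies in `𝔪_F^m`; so does
`N x`, because `2 N x = Tr (x σx)` for the nontrivial automorphism `σ` of `E/F`, where
`x σx ∈ 𝔪_E^{em+1}` and `2` is a unit (`p` is odd). Hence `χ ∘ N` is trivial on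
`U_E^{e(m-1)+1}`. Conversely, choose `u ∈ U_F^{m-1}` with `χ u ≠ 1`. Then `u ∈ U_E^{e(m-1)}` and
`N u = u²`, while `u^p ∈ U_F^m` gives `(χ u)^p = 1`; as `p` is odd,
`χ (N u) = (χ u)² ≠ 1`. -/

section UnitFiltration

variable {F : Type*} [Field F] {O : Subring F} {𝔪 : Ideal O}

theorem inUnitFiltration.mono {n k : ℕ} (hnk : n ≤ k) {u : Fˣ}
    (hu : inUnitFiltration O 𝔪 k u) : inUnitFiltration O 𝔪 n u :=
  let ⟨huO, hu'O, x, hx, hxu⟩ := hu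
  ⟨huO, hu'O, x, Ideal.pow_le_pow_right hnk hx, hxu⟩

theorem inUnitFiltration_of_eq_one_add (h𝔪 : ∀ x, x ∈ 𝔪 ↔ ¬IsUnit x) {n : ℕ} (hn : n ≠ 0)
    {u : Fˣ} {x : O} (hx : x ∈ 𝔪 ^ n) (hxu : (u : F) = 1 + x) : inUnitFiltration O 𝔪 n u := by
  have hunit : IsUnit (1 + x) := by
    by_contra h
    have h1 : 1 + x - x ∈ 𝔪 := 𝔪.sub_mem ((h𝔪 _).2 h) (Ideal.pow_le_self hn hx)
    exact (h𝔪 1).1 (by simpa using h1) isUnit_one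
  obtain ⟨a, ha⟩ := hunit
  have hau : ((a : O) : F) = u := by rw [ha, hxu]; rfl
  refine ⟨hau ▸ (a : O).2, ?_, x, hx, by rw [hxu]; ring⟩
  have hinv : (((a⁻¹ : Oˣ) : O) : F) = ((a : O) : F)⁻¹ :=
    eq_inv_of_mul_eq_one_left (by exact_mod_cast congrArg Subtype.val a.inv_mul)
  rw [Units.val_inv_eq_inv_val, ← hau, ← hinv]
  exact (a⁻¹ : Oˣ).1.2

theorem inUnitFiltration.pow {n : ℕ} (hn : n ≠ 0) {k : ℕ} (hk : (k : O) ∈ 𝔪) {u : Fˣ}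
    (hu : inUnitFiltration O 𝔪 n u) : inUnitFiltration O 𝔪 (n + 1) (u ^ k) := by
  obtain ⟨huO, hu'O, x, hx, hxu⟩ := hu
  obtain ⟨c, hc⟩ := (Polynomial.X ^ k : Polynomial O).binomExpansion 1 x
  simp only [Polynomial.eval_pow, Polynomial.eval_X, one_pow, Polynomial.derivative_X_pow,
    Polynomial.eval_mul, Polynomial.eval_C, mul_one] at hc
  have hsub : (1 + x) ^ k - 1 = k * x + c * x ^ 2 := by rw [hc]; ring
  refine ⟨by simpa using O.pow_mem huO k, by simpa using O.pow_mem hu'O k,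
    (1 + x) ^ k - 1, ?_, ?_⟩
  · have hkx : k * x ∈ 𝔪 ^ (n + 1) := pow_succ' 𝔪 n ▸ Ideal.mul_mem_mul hk hx
    have hx2 : x ^ 2 ∈ 𝔪 ^ (n * 2) := by rw [pow_mul]; exact Ideal.pow_mem_pow hx 2
    rw [hsub]
    exact Ideal.add_mem _ hkx
      (Ideal.mul_mem_left _ _ (Ideal.pow_le_pow_right (show n + 1 ≤ n * 2 by omega) hx2))
  · rw [Units.val_pow_eq_pow_val]
    push_cast
    rw [hxu]
    ring

theorem inUnitFiltration.map {E : Type*} [Field E] {O' : Subring E} {𝔪' : Ideal O'}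
    (f : F →+* E) (φ : O →+* O') (hφ : ∀ a, (φ a : E) = f a) {n k : ℕ}
    (hle : (𝔪 ^ n).map φ ≤ 𝔪' ^ k) {u : Fˣ} (hu : inUnitFiltration O 𝔪 n u) :
    inUnitFiltration O' 𝔪' k (Units.map f u) := by
  obtain ⟨huO, hu'O, x, hx, hxu⟩ := hu
  refine ⟨?_, ?_, φ x, hle (Ideal.mem_map_of_mem φ hx), ?_⟩
  · simpa [hφ] using (φ ⟨_, huO⟩).2
  · simpa [hφ] using (φ ⟨_, hu'O⟩).2
  · simp [hφ, hxu]

theorem trivialOnUnits_charConductor {χ : Fˣ →* ℂˣ} (hχ : ∃ n, trivialOnUnits O 𝔪 χ n) :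
    trivialOnUnits O 𝔪 χ (charConductor O 𝔪 χ) :=
  Nat.sInf_mem hχ

theorem exists_ne_one_of_charConductor_eq_succ {χ : Fˣ →* ℂˣ} {n : ℕ}
    (h : charConductor O 𝔪 χ = n + 1) : ∃ u, inUnitFiltration O 𝔪 n u ∧ χ u ≠ 1 := by
  have hlt : n < charConductor O 𝔪 χ := by omega
  have : ¬ trivialOnUnits O 𝔪 χ n := Nat.notMem_of_lt_sInf hlt
  simpa [trivialOnUnits] using this

theorem charConductor_eq_succ {χ : Fˣ →* ℂˣ} {n : ℕ} (h : trivialOnUnits O 𝔪 χ (n + 1))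
    {u : Fˣ} (hu : inUnitFiltration O 𝔪 n u) (hχu : χ u ≠ 1) : charConductor O 𝔪 χ = n + 1 :=
  le_antisymm (Nat.sInf_le h) <| Nat.succ_le_of_lt <| lt_of_not_ge fun hle =>
    hχu (trivialOnUnits_charConductor ⟨_, h⟩ u (hu.mono hle))

end UnitFiltration

section IdealTrace

variable {A B : Type*} [CommRing A] [CommRing B] (φ : A →+* B) (t : B →+ A)

theorem apply_mem_mul_of_mem_map_mul (ht : ∀ a b, t (φ a * b) = a * t b)
    {K I : Ideal A} {J : Ideal B} (hJ : ∀ b ∈ J, t b ∈ I) {w : B} (hw : w ∈ K.map φ * J) :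
    t w ∈ K * I := by
  refine Submodule.mul_induction_on hw (fun a ha b hb => ?_)
    (fun x y hx hy => by rw [map_add]; exact add_mem hx hy)
  induction ha using Submodule.span_induction generalizing b with
  | mem a ha =>
    obtain ⟨y, hy, rfl⟩ := ha
    rw [ht]
    exact Ideal.mul_mem_mul hy (hJ b hb)
  | zero => simp
  | add x y _ _ hx hy =>
    rw [add_mul, map_add]
    exact add_mem (hx b hb) (hy b hb)
  | smul c x _ hx =>
    rw [smul_eq_mul, mul_assoc, mul_left_comm]
    exact hx _ (J.mul_mem_left c hb)

theorem apply_mem_pow_succ_of_mem_pow (ht : ∀ a b, t (φ a * b) = a * t b)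
    {I : Ideal A} {J : Ideal B} {e : ℕ} (he : I.map φ = J ^ e) (hJ : ∀ b ∈ J, t b ∈ I)
    {j : ℕ} {w : B} (hw : w ∈ J ^ (e * j + 1)) : t w ∈ I ^ (j + 1) := by
  rw [pow_succ]
  refine apply_mem_mul_of_mem_map_mul φ t ht hJ ?_
  rwa [Ideal.map_pow, he, ← pow_mul, ← pow_succ]

end IdealTrace

section Conjugation

variable {A B : Type*} [CommRing A] [CommRing B] {mA : Ideal A} {mB : Ideal B}

theorem RingEquiv.apply_mem_of_nonunits (hmB : ∀ b, b ∈ mB ↔ ¬IsUnit b) (σ : B ≃+* B)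
    {b : B} (hb : b ∈ mB) : σ b ∈ mB :=
  (hmB _).2 fun hu => (hmB b).1 hb ((MulEquiv.isUnit_map σ.toMulEquiv).1 hu)

theorem RingEquiv.apply_mem_pow_of_nonunits (hmB : ∀ b, b ∈ mB ↔ ¬IsUnit b) (σ : B ≃+* B)
    {k : ℕ} {b : B} (hb : b ∈ mB ^ k) : σ b ∈ mB ^ k := by
  have hle : mB.map σ ≤ mB :=
    Ideal.map_le_iff_le_comap.2 fun _ hb => σ.apply_mem_of_nonunits hmB hb
  exact (Ideal.map_pow σ mB k ▸ Ideal.pow_right_mono hle k) (Ideal.mem_map_of_mem σ hb)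

variable {φ : A →+* B} {σ : B ≃+* B} {t : B →+ A}

theorem trace_apply_mul (hφ : Function.Injective φ) (hσφ : ∀ a, σ (φ a) = φ a)
    (ht : ∀ b, φ (t b) = b + σ b) (a : A) (b : B) : t (φ a * b) = a * t b :=
  hφ (by rw [ht, map_mul, map_mul, ht, hσφ]; ring)

theorem trace_mem_of_mem (hmA : ∀ a, a ∈ mA ↔ ¬IsUnit a) (hmB : ∀ b, b ∈ mB ↔ ¬IsUnit b)
    (ht : ∀ b, φ (t b) = b + σ b) {b : B} (hb : b ∈ mB) : t b ∈ mA :=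
  (hmA _).2 fun hu => (hmB _).1 (ht b ▸ mB.add_mem hb (σ.apply_mem_of_nonunits hmB hb)) (hu.map φ)

theorem trace_mem_pow_succ (hmA : ∀ a, a ∈ mA ↔ ¬IsUnit a) (hmB : ∀ b, b ∈ mB ↔ ¬IsUnit b)
    (hφ : Function.Injective φ) (hσφ : ∀ a, σ (φ a) = φ a) (ht : ∀ b, φ (t b) = b + σ b)
    {e : ℕ} (he : mA.map φ = mB ^ e) {n : ℕ} {x : B} (hx : x ∈ mB ^ (e * n + 1)) :
    t x ∈ mA ^ (n + 1) :=
  apply_mem_pow_succ_of_mem_pow φ t (trace_apply_mul hφ hσφ ht) he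
    (fun _ => trace_mem_of_mem hmA hmB ht) hx

theorem mem_pow_succ_of_apply_eq_mul_conj (hmA : ∀ a, a ∈ mA ↔ ¬IsUnit a)
    (hmB : ∀ b, b ∈ mB ↔ ¬IsUnit b) (hφ : Function.Injective φ) (hσφ : ∀ a, σ (φ a) = φ a)
    (ht : ∀ b, φ (t b) = b + σ b) (h2 : IsUnit (2 : A)) {e : ℕ} (he : mA.map φ = mB ^ e)
    {n : ℕ} (hn : n ≠ 0) {x : B} (hx : x ∈ mB ^ (e * n + 1)) {a : A} (ha : φ a = x * σ x) :
    a ∈ mA ^ (n + 1) := by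
  have hen : e ≤ e * n := Nat.le_mul_of_pos_right e (Nat.pos_of_ne_zero hn)
  have hxσx : x * σ x ∈ mB ^ (e * (n + 1) + 1) := by
    refine Ideal.pow_le_pow_right (show e * (n + 1) + 1 ≤ (e * n + 1) + (e * n + 1) by
      rw [Nat.mul_succ]; omega) ?_
    rw [pow_add]
    exact Ideal.mul_mem_mul hx (σ.apply_mem_pow_of_nonunits hmB hx)
  have htrace : t (φ a) = 2 * a := hφ (by rw [ht, hσφ, map_mul, map_ofNat]; ring)
  have h2a : 2 * a ∈ mA ^ (n + 1 + 1) :=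
    htrace ▸ ha ▸ trace_mem_pow_succ hmA hmB hφ hσφ ht he hxσx
  obtain ⟨u, hu⟩ := h2
  have hau : a = ↑u⁻¹ * (2 * a) := by rw [← hu, ← mul_assoc, Units.inv_mul, one_mul]
  exact hau ▸ Ideal.mul_mem_left _ _ (Ideal.pow_le_pow_right (Nat.le_succ _) h2a)

end Conjugation

theorem isUnit_two_of_odd_of_natCast_mem {A : Type*} [CommRing A] {𝔪 : Ideal A}
    (h𝔪 : ∀ a, a ∈ 𝔪 ↔ ¬IsUnit a) {k : ℕ} (hk : Odd k) (hk𝔪 : (k : A) ∈ 𝔪) :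
    IsUnit (2 : A) := by
  by_contra h2
  obtain ⟨j, rfl⟩ := hk
  have h1 : ((2 * j + 1 : ℕ) : A) - 2 * j ∈ 𝔪 := 𝔪.sub_mem hk𝔪 (𝔪.mul_mem_right _ ((h𝔪 2).2 h2))
  push_cast at h1
  exact (h𝔪 1).1 (by simpa using h1) isUnit_one

theorem natCast_p_mem_of_nonunits {p : ℕ} [Fact p.Prime] {F : Type*} [Field F]
    [Algebra ℚ_[p] F] [Algebra ℤ_[p] F] [IsScalarTower ℤ_[p] ℚ_[p] F] {O : Subring F}
    (hO : ∀ x, x ∈ O ↔ IsIntegral ℤ_[p] x) {𝔪 : Ideal O} (h𝔪 : ∀ x, x ∈ 𝔪 ↔ ¬IsUnit x) :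
    (p : O) ∈ 𝔪 := by
  refine (h𝔪 _).2 fun ⟨u, hu⟩ => PadicInt.p_nonunit (p := p) ?_
  have hinv : algebraMap ℚ_[p] F (p : ℚ_[p])⁻¹ = ((u⁻¹ : Oˣ) : O) := by
    rw [map_inv₀, map_natCast]
    refine inv_eq_of_mul_eq_one_right ?_
    exact_mod_cast congrArg Subtype.val (hu ▸ u.mul_inv)
  have hint : IsIntegral ℤ_[p] ((p : ℚ_[p])⁻¹) :=
    (isIntegral_algHom_iff (IsScalarTower.toAlgHom ℤ_[p] ℚ_[p] F)
      (algebraMap ℚ_[p] F).injective).1 (hinv ▸ (hO _).1 (u⁻¹ : Oˣ).1.2)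
  obtain ⟨z, hz⟩ := IsIntegrallyClosed.isIntegral_iff.1 hint
  refine IsUnit.of_mul_eq_one z (PadicInt.ext ?_)
  rw [PadicInt.algebraMap_apply] at hz
  push_cast
  rw [hz, mul_inv_cancel₀ (by exact_mod_cast (Fact.out : p.Prime).ne_zero)]

section QuadraticExtension

variable {F E : Type*} [Field F] [Field E] [Algebra F E] [IsGalois F E]

theorem exists_algEquiv_trace_norm_of_finrank_eq_two (h : Module.finrank F E = 2) :
    ∃ σ : E ≃ₐ[F] E, ∀ z, algebraMap F E (Algebra.trace F E z) = z + σ z ∧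
      algebraMap F E (Algebra.norm F z) = z * σ z := by
  classical
  have : FiniteDimensional F E := .of_finrank_eq_succ h
  have hcard : Fintype.card (E ≃ₐ[F] E) = 2 := by
    rw [Fintype.card_eq_nat_card, IsGalois.card_aut_eq_finrank, h]
  obtain ⟨σ, hσ⟩ := Fintype.exists_ne_of_one_lt_card (α := E ≃ₐ[F] E) (by omega) 1
  have huniv : Finset.univ = {1, σ} :=
    (Finset.eq_univ_of_card _ (by rw [Finset.card_pair hσ.symm, hcard])).symm
  refine ⟨σ, fun z => ⟨?_, ?_⟩⟩
  · rw [trace_eq_sum_automorphisms, huniv, Finset.sum_pair hσ.symm]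
    rfl
  · rw [Algebra.norm_eq_prod_automorphisms, huniv, Finset.prod_pair hσ.symm]
    rfl

theorem norm_one_add_of_finrank_eq_two (h : Module.finrank F E = 2) (x : E) :
    Algebra.norm F (1 + x) = 1 + Algebra.trace F E x + Algebra.norm F x := by
  obtain ⟨σ, hσ⟩ := exists_algEquiv_trace_norm_of_finrank_eq_two h
  apply (algebraMap F E).injective
  simp only [map_add, map_one, (hσ _).1, (hσ _).2]
  ring

end QuadraticExtension

section IntegralClosure

variable {R F E : Type*} [CommRing R] [Field F] [Field E] [Algebra R F] [Algebra F E]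
  [Algebra R E] [IsScalarTower R F E] {OF : Subring F} {OE : Subring E}

theorem AlgEquiv.apply_mem_of_isIntegral (hOE : ∀ x, x ∈ OE ↔ IsIntegral R x)
    (σ : E ≃ₐ[F] E) {z : E} (hz : z ∈ OE) : σ z ∈ OE :=
  (hOE _).2 (((hOE z).1 hz).map ((σ : E →ₐ[F] E).restrictScalars R))

theorem inUnitFiltration.norm [IsGalois F E] (hquad : Module.finrank F E = 2)
    (hOF : ∀ x, x ∈ OF ↔ IsIntegral R x) (hOE : ∀ x, x ∈ OE ↔ IsIntegral R x)
    {mF : Ideal OF} {mE : Ideal OE} (hmF : ∀ x, x ∈ mF ↔ ¬IsUnit x)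
    (hmE : ∀ x, x ∈ mE ↔ ¬IsUnit x) (h2 : IsUnit (2 : OF)) (φ : OF →+* OE)
    (hφ : ∀ a, (φ a : E) = algebraMap F E a) {e : ℕ} (he : mF.map φ = mE ^ e) {n : ℕ}
    (hn : n ≠ 0) {u : Eˣ} (hu : inUnitFiltration OE mE (e * n + 1) u) :
    inUnitFiltration OF mF (n + 1) (Units.map (Algebra.norm F : E →* F) u) := by
  have : FiniteDimensional F E := .of_finrank_eq_succ hquad
  obtain ⟨σ, hσ⟩ := exists_algEquiv_trace_norm_of_finrank_eq_two hquad
  let σO : OE ≃+* OE := (σ : E ≃+* E).restrict OE OE fun z =>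
    ⟨σ.apply_mem_of_isIntegral hOE, fun h => by simpa using σ.symm.apply_mem_of_isIntegral hOE h⟩
  let t : OE →+ OF :=
    ((Algebra.trace F E).toAddMonoidHom.comp OE.subtype.toAddMonoidHom).codRestrict
      OF.toAddSubmonoid fun z => (hOF _).2 (Algebra.isIntegral_trace ((hOE _).1 z.2))
  have hφinj : Function.Injective φ := fun a b hab =>
    Subtype.ext ((algebraMap F E).injective (by rw [← hφ, ← hφ, hab]))
  have hσφ : ∀ a, σO (φ a) = φ a := fun a => Subtype.ext (by simp [σO, hφ])
  have ht : ∀ b, φ (t b) = b + σO b := fun b => Subtype.ext (by simp [σO, t, hφ, (hσ b).1])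
  obtain ⟨-, -, x, hx, hxu⟩ := hu
  have hNx : Algebra.norm F (x : E) ∈ OF := (hOF _).2 (Algebra.isIntegral_norm F ((hOE _).1 x.2))
  have hTr := trace_mem_pow_succ hmF hmE hφinj hσφ ht he hx
  have hN := mem_pow_succ_of_apply_eq_mul_conj hmF hmE hφinj hσφ ht h2 he hn hx
    (a := ⟨_, hNx⟩) (Subtype.ext (by simp [σO, hφ, (hσ x).2]))
  refine inUnitFiltration_of_eq_one_add hmF n.succ_ne_zero (Ideal.add_mem _ hTr hN) ?_
  rw [Units.coe_map, show (u : E) = 1 + x by rw [hxu]; ring,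
    norm_one_add_of_finrank_eq_two hquad]
  simp [t, add_assoc]

end IntegralClosure

theorem pow_two_ne_one_of_pow_odd_eq_one {M : Type*} [Monoid M] {a : M} (ha : a ≠ 1) {k : ℕ}
    (hk : Odd k) (hak : a ^ k = 1) : a ^ 2 ≠ 1 := fun ha2 => by
  have h := pow_gcd_eq_one.2 ⟨ha2, hak⟩
  rw [Nat.Coprime.gcd_eq_one (Nat.coprime_two_left.2 hk), pow_one] at h
  exact ha h

theorem conductor_baseChange_tame_general
    (p : ℕ) [Fact p.Prime] (hp : p ≠ 2)
    (F E : Type*) [Field F] [Field E]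
    [Algebra ℚ_[p] F]
    [Algebra ℤ_[p] F] [IsScalarTower ℤ_[p] ℚ_[p] F]
    [Algebra F E] [Algebra ℚ_[p] E] [IsScalarTower ℚ_[p] F E]
    [Algebra ℤ_[p] E] [IsScalarTower ℤ_[p] ℚ_[p] E]
    -- `E/F` is quadratic
    (hquad : Module.finrank F E = 2)
    -- `O_F` is the ring of integers of `F` and `m_F` its maximal ideal
    (OF : Subring F) (hOF : ∀ x : F, x ∈ OF ↔ IsIntegral ℤ_[p] x)
    (mF : Ideal OF) (hmF : ∀ x : OF, x ∈ mF ↔ ¬ IsUnit x)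
    -- `O_E` is the ring of integers of `E` and `m_E` its maximal ideal
    (OE : Subring E) (hOE : ∀ x : E, x ∈ OE ↔ IsIntegral ℤ_[p] x)
    (mE : Ideal OE) (hmE : ∀ x : OE, x ∈ mE ↔ ¬ IsUnit x)
    (hmap : ∀ x : F, x ∈ OF → algebraMap F E x ∈ OE)
    -- `e` is the ramification index: `𝔪_F·𝒪_E = 𝔪_E^e`
    (e : ℕ)
    (he : Ideal.span ((fun x : OF => (⟨algebraMap F E (x : F), hmap _ x.2⟩ : OE)) ''
        (mF : Set OF)) = mE ^ e)
    -- `χ` is a character of `F^×`, trivial on `U_F^n` for some `n`, of conductor `m ≥ 2`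
    (χ : Fˣ →* ℂˣ) (hχ : ∃ n, trivialOnUnits OF mF χ n)
    (m : ℕ) (hm : charConductor OF mF χ = m) (hm2 : 2 ≤ m) :
    charConductor OE mE (χ.comp (Units.map (Algebra.norm F : E →* F))) = e * (m - 1) + 1 := by
  obtain ⟨n, rfl⟩ : ∃ n, m = n + 1 := ⟨m - 1, by omega⟩
  have : CharZero F := charZero_of_injective_algebraMap (algebraMap ℚ_[p] F).injective
  have : Algebra.IsQuadraticExtension F E := ⟨hquad⟩
  have : IsScalarTower ℤ_[p] F E := .of_algebraMap_eq' <| by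
    rw [IsScalarTower.algebraMap_eq ℤ_[p] ℚ_[p] E, IsScalarTower.algebraMap_eq ℚ_[p] F E,
      IsScalarTower.algebraMap_eq ℤ_[p] ℚ_[p] F, RingHom.comp_assoc]
  have hpmF : (p : OF) ∈ mF := natCast_p_mem_of_nonunits hOF hmF
  have hodd : Odd p := (Fact.out : p.Prime).odd_of_ne_two hp
  let φ : OF →+* OE := (algebraMap F E).restrict OF OE hmap
  have hχm : trivialOnUnits OF mF χ (n + 1) := hm ▸ trivialOnUnits_charConductor hχ
  obtain ⟨u, hu, hχu⟩ := exists_ne_one_of_charConductor_eq_succ hm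
  have hNu : Units.map (Algebra.norm F : E →* F) (Units.map (algebraMap F E : F →* E) u) = u ^ 2 :=
    Units.ext (by simp [Algebra.norm_algebraMap, hquad])
  refine charConductor_eq_succ (fun v hv => hχm _ ?_) (hu.map _ φ (fun _ => rfl) ?_) ?_
  · exact inUnitFiltration.norm hquad hOF hOE hmF hmE
      (isUnit_two_of_odd_of_natCast_mem hmF hodd hpmF) φ (fun _ => rfl) he (by omega) hv
  · rw [Ideal.map_pow, show mF.map φ = mE ^ e from he, ← pow_mul, Nat.add_sub_cancel]
  · rw [MonoidHom.comp_apply, hNu, map_pow]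
    exact pow_two_ne_one_of_pow_odd_eq_one hχu hodd
      (by rw [← map_pow]; exact hχm _ (hu.pow (by omega) hpmF))

/-- for a tamely ramified quadratic extension `E/F` of `p`-adic fields (`p` odd)
and a character `χ` of `F^×` of conductor `m ≥ 2`, the conductor of `χ ∘ N_{E/F}` equals
`e(E/F)·(m-1) + 1`. -/
theorem conductor_baseChange_tame
    (p : ℕ) [Fact p.Prime] (hp : p ≠ 2)
    (F E : Type*) [Field F] [Field E]
    [Algebra ℚ_[p] F] [FiniteDimensional ℚ_[p] F]
    [Algebra ℤ_[p] F] [IsScalarTower ℤ_[p] ℚ_[p] F]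
    [Algebra F E] [Algebra ℚ_[p] E] [IsScalarTower ℚ_[p] F E]
    [Algebra ℤ_[p] E] [IsScalarTower ℤ_[p] ℚ_[p] E]
    -- `E/F` is quadratic
    (hquad : Module.finrank F E = 2)
    -- `O_F` is the ring of integers of `F` and `m_F` its maximal ideal
    (OF : Subring F) (hOF : ∀ x : F, x ∈ OF ↔ IsIntegral ℤ_[p] x)
    (mF : Ideal OF) (hmF : ∀ x : OF, x ∈ mF ↔ ¬ IsUnit x)
    -- `O_E` is the ring of integers of `E` and `m_E` its maximal ideal
    (OE : Subring E) (hOE : ∀ x : E, x ∈ OE ↔ IsIntegral ℤ_[p] x)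
    (mE : Ideal OE) (hmE : ∀ x : OE, x ∈ mE ↔ ¬ IsUnit x)
    (hmap : ∀ x : F, x ∈ OF → algebraMap F E x ∈ OE)
    -- `e` is the ramification index: `𝔪_F·𝒪_E = 𝔪_E^e`
    (e : ℕ)
    (he : Ideal.span ((fun x : OF => (⟨algebraMap F E (x : F), hmap _ x.2⟩ : OE)) ''
        (mF : Set OF)) = mE ^ e)
    -- `E/F` is tamely ramified
    (htame : ¬ (p ∣ e))
    -- `χ` is a character of `F^×`, trivial on `U_F^n` for some `n`, of conductor `m ≥ 2`
    (χ : Fˣ →* ℂˣ) (hχ : ∃ n, trivialOnUnits OF mF χ n)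
    (m : ℕ) (hm : charConductor OF mF χ = m) (hm2 : 2 ≤ m) :
    charConductor OE mE (χ.comp (Units.map (Algebra.norm F : E →* F))) = e * (m - 1) + 1 :=
  conductor_baseChange_tame_general p hp F E hquad OF hOF mF hmF OE hOE mE hmE hmap e he χ hχ m hm
    hm2
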